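/- arXiv:2104.04476 — 3 statements merged into one kernel-verified Lean document; each statement's English description precedes it below -/
import Mathlib

section
/- Let S, T be antichains in F = F_{2k}^{[1,n]} with T ≺_p S, and let i, ℓ ≥ 1. Then T([i, i+2ℓ-1]) ≺_p S([i+1, i+2ℓ]). -/
/-- `F ≤_p G`: componentwise comparison of the increasing enumerations. -/
def lep (F G : Finset ℕ) : Prop :=
  F.card = G.card ∧ ∀ ℓ, (F.sort (· ≤ ·)).getD ℓ 0 ≤ (G.sort (· ≤ ·)).getD ℓ 0

/-- `F ≺_p G`: `F ≤_p G - 1` componentwise on increasing enumerations. -/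
def prep (F G : Finset ℕ) : Prop :=
  F.card = G.card ∧ ∀ ℓ < F.card,
    (F.sort (· ≤ ·)).getD ℓ 0 + 1 ≤ (G.sort (· ≤ ·)).getD ℓ 0

/-- The poset `F_{2k}^{[1,n]}`: `2k`-subsets of `[n]` that are disjoint unions
of `k` adjacent pairs `{y_j, y_j + 1}` with gaps `≥ 2`. -/
def FF (k n : ℕ) : Set (Finset ℕ) :=
  {F | ∃ y : ℕ → ℕ, (1 ≤ y 1) ∧ (∀ j, 1 ≤ j → j ≤ k → y j + 1 ≤ n) ∧
    (∀ j, 1 ≤ j → j < k → y j + 2 ≤ y (j + 1)) ∧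
    F = (Finset.Icc 1 k).biUnion (fun j => {y j, y j + 1})}

/-- The order ideal of `F_{2k}^{[1,n]}` generated by `S`. -/
def idealOf (k n : ℕ) (S : Set (Finset ℕ)) : Set (Finset ℕ) :=
  {G | G ∈ FF k n ∧ ∃ F ∈ S, lep G F}

/-- `S` is an antichain in `F_{2k}^{[1,n]}`. -/
def IsAC (k n : ℕ) (S : Set (Finset ℕ)) : Prop :=
  S ⊆ FF k n ∧ ∀ F ∈ S, ∀ G ∈ S, lep F G → F = G

/-- The candidates defining `S(J)` for the interval `J = [j, j+2l-1]`:
sets `H ⊆ [j+2l, n]` with `J ∪ H ∈ F(S)`. -/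
def SJcand (k n : ℕ) (S : Set (Finset ℕ)) (j l : ℕ) : Set (Finset ℕ) :=
  {H | (∀ a ∈ H, j + 2 * l ≤ a ∧ a ≤ n) ∧
    (Finset.Icc j (j + 2 * l - 1) ∪ H) ∈ idealOf k n S}

/-- `S(J)`, `J = [j, j+2l-1]`: the maximal elements of `SJcand`. -/
def SJ (k n : ℕ) (S : Set (Finset ℕ)) (j l : ℕ) : Set (Finset ℕ) :=
  {H | H ∈ SJcand k n S j l ∧ ∀ H' ∈ SJcand k n S j l, lep H H' → H = H'}

/-- `T ≤_p S` for antichains: every element of `T` is `≤_p` some element of `S`. -/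
def ACle (T S : Set (Finset ℕ)) : Prop := ∀ G ∈ T, ∃ F ∈ S, lep G F

/-- `T ≺_p S` for antichains: every element of `T` is `≺_p` some element of `S`. -/
def ACprec (T S : Set (Finset ℕ)) : Prop := ∀ G ∈ T, ∃ F ∈ S, prep G F

/-- `S - 1`: subtract the all-ones vector from each element of `S` with
minimum `> 1`. -/
def sub1 (S : Set (Finset ℕ)) : Set (Finset ℕ) :=
  {G | ∃ F ∈ S, (∀ a ∈ F, 2 ≤ a) ∧ G = F.image (fun a => a - 1)}

/-- The facets of `B(S, i)`: elements of the order ideal `F(S)` whose minimum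
is at least `i`. -/
def Bfacets (k n : ℕ) (S : Set (Finset ℕ)) (i : ℕ) : Set (Finset ℕ) :=
  {G | G ∈ idealOf k n S ∧ ∀ a ∈ G, i ≤ a}

/-!
Shifting by one turns `≺_p` into `≤_p`: `F ≺_p G` iff `F + 1 ≤_p G`. For `H ∈ T(J)` there are
`F ∈ T` and `F' ∈ S` with `J ∪ H ≤_p F ≺_p F'`, so `(J ∪ H) + 1 = (J + 1) ∪ (H + 1) ≤_p F'`; the
shift stays in `F_{2k}^{[1,n]}` because `J ∪ H ≺_p F' ⊆ [n]` bounds its entries by `n - 1`.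
Thus `H + 1` is a candidate for `S(J + 1)`, lies below a maximal candidate `H'`, and `H ≺_p H'`.
-/

open Finset

lemma sort_image_add_one (F : Finset ℕ) :
    (F.image (· + 1)).sort (· ≤ ·) = (F.sort (· ≤ ·)).map (· + 1) := by
  have hmap : F.image (· + 1) = F.map (addRightEmbedding 1) :=
    (map_eq_image (addRightEmbedding 1) F).symm
  rw [hmap]
  exact (StrictMonoOn.map_finsetSort (f := addRightEmbedding 1) (s := F)
    fun a _ b _ h => by simpa using h).symm

lemma getD_sort_image_add_one (F : Finset ℕ) {ℓ : ℕ} (hℓ : ℓ < F.card) :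
    ((F.image (· + 1)).sort (· ≤ ·)).getD ℓ 0 = (F.sort (· ≤ ·)).getD ℓ 0 + 1 := by
  rw [← length_sort (· ≤ ·)] at hℓ
  rw [sort_image_add_one, List.getD_eq_getElem _ 0 (by simpa using hℓ),
    List.getD_eq_getElem _ 0 hℓ, List.getElem_map]

lemma getD_sort_mem (F : Finset ℕ) {ℓ : ℕ} (hℓ : ℓ < F.card) :
    (F.sort (· ≤ ·)).getD ℓ 0 ∈ F := by
  rw [← length_sort (· ≤ ·)] at hℓ
  rw [List.getD_eq_getElem _ 0 hℓ]
  exact (mem_sort _).mp (List.getElem_mem hℓ)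

lemma exists_getD_sort_eq (F : Finset ℕ) {b : ℕ} (hb : b ∈ F) :
    ∃ ℓ < F.card, (F.sort (· ≤ ·)).getD ℓ 0 = b := by
  obtain ⟨ℓ, hℓ, rfl⟩ := List.mem_iff_getElem.mp ((mem_sort (· ≤ ·)).mpr hb)
  exact ⟨ℓ, by simpa using hℓ, List.getD_eq_getElem _ 0 hℓ⟩

lemma eq_of_card_eq_of_getD_sort_eq {F G : Finset ℕ} (hcard : F.card = G.card)
    (h : ∀ ℓ, (F.sort (· ≤ ·)).getD ℓ 0 = (G.sort (· ≤ ·)).getD ℓ 0) : F = G := by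
  have hsort : F.sort (· ≤ ·) = G.sort (· ≤ ·) := by
    refine List.ext_getElem (by simpa using hcard) fun ℓ hF hG => ?_
    simpa only [List.getD_eq_getElem _ 0 hF, List.getD_eq_getElem _ 0 hG] using h ℓ
  simpa using congrArg List.toFinset hsort

lemma lep_trans {F G H : Finset ℕ} (hFG : lep F G) (hGH : lep G H) : lep F H :=
  ⟨hFG.1.trans hGH.1, fun ℓ => (hFG.2 ℓ).trans (hGH.2 ℓ)⟩

lemma prep_of_lep_of_prep {F G H : Finset ℕ} (hFG : lep F G) (hGH : prep G H) : prep F H :=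
  ⟨hFG.1.trans hGH.1, fun ℓ hℓ => (Nat.add_le_add_right (hFG.2 ℓ) 1).trans
    (hGH.2 ℓ (hFG.1 ▸ hℓ))⟩

lemma prep_iff_lep_image_add_one {F G : Finset ℕ} :
    prep F G ↔ lep (F.image (· + 1)) G := by
  have hcard : (F.image (· + 1)).card = F.card := card_image_of_injective _ (add_left_injective 1)
  refine ⟨fun h => ⟨hcard.trans h.1, fun ℓ => ?_⟩, fun h => ⟨hcard ▸ h.1, fun ℓ hℓ => ?_⟩⟩
  · by_cases hℓ : ℓ < F.card
    · rw [getD_sort_image_add_one F hℓ]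
      exact h.2 ℓ hℓ
    · rw [List.getD_eq_default _ _ (by simpa [hcard] using hℓ)]
      exact Nat.zero_le _
  · simpa only [getD_sort_image_add_one F hℓ] using h.2 ℓ

lemma le_of_mem_FF {k n : ℕ} {F : Finset ℕ} (hF : F ∈ FF k n) {a : ℕ} (ha : a ∈ F) : a ≤ n := by
  obtain ⟨y, -, hyn, -, rfl⟩ := hF
  obtain ⟨j, hj, hja⟩ := mem_biUnion.mp ha
  obtain ⟨hj1, hjk⟩ := mem_Icc.mp hj
  have := hyn j hj1 hjk
  simp only [mem_insert, mem_singleton] at hja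
  omega

lemma prep.add_one_le {F G : Finset ℕ} {n : ℕ} (hFG : prep F G) (hG : ∀ a ∈ G, a ≤ n)
    {b : ℕ} (hb : b ∈ F) : b + 1 ≤ n := by
  obtain ⟨ℓ, hℓ, rfl⟩ := exists_getD_sort_eq F hb
  exact (hFG.2 ℓ hℓ).trans (hG _ (getD_sort_mem G (hFG.1 ▸ hℓ)))

lemma image_add_one_mem_FF {k n : ℕ} {F : Finset ℕ} (hF : F ∈ FF k n)
    (hn : ∀ b ∈ F, b + 1 ≤ n) : F.image (· + 1) ∈ FF k n := by
  obtain ⟨y, hy1, hyn, hgap, rfl⟩ := hF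
  refine ⟨fun j => y j + 1, Nat.le_succ_of_le hy1, fun j hj1 hjk => ?_,
    fun j hj1 hjk => Nat.add_le_add_right (hgap j hj1 hjk) 1, ?_⟩
  · exact hn _ (mem_biUnion.mpr ⟨j, mem_Icc.mpr ⟨hj1, hjk⟩, by simp⟩)
  · rw [biUnion_image]
    simp only [image_insert, image_singleton]

lemma image_add_one_mem_idealOf {k n : ℕ} {S T : Set (Finset ℕ)} (hS : S ⊆ FF k n)
    (hTS : ACprec T S) {G : Finset ℕ} (hG : G ∈ idealOf k n T) :
    G.image (· + 1) ∈ idealOf k n S := by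
  obtain ⟨hGF, F, hFT, hGlepF⟩ := hG
  obtain ⟨F', hF'S, hFF'⟩ := hTS F hFT
  have hGF' : prep G F' := prep_of_lep_of_prep hGlepF hFF'
  exact ⟨image_add_one_mem_FF hGF fun b hb => hGF'.add_one_le (fun _ => le_of_mem_FF (hS hF'S)) hb,
    F', hF'S, prep_iff_lep_image_add_one.mp hGF'⟩

lemma image_add_one_mem_SJcand {k n j l : ℕ} (hl : 1 ≤ l) {S T : Set (Finset ℕ)}
    (hS : S ⊆ FF k n) (hTS : ACprec T S) {H : Finset ℕ} (hH : H ∈ SJcand k n T j l) :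
    H.image (· + 1) ∈ SJcand k n S (j + 1) l := by
  have hshift : (Icc j (j + 2 * l - 1) ∪ H).image (· + 1) =
      Icc (j + 1) (j + 1 + 2 * l - 1) ∪ H.image (· + 1) := by
    rw [image_union, image_add_right_Icc]
    -- `1 ≤ l` keeps `2 * l - 1` from truncating
    congr 2
    omega
  have hideal := image_add_one_mem_idealOf hS hTS hH.2
  rw [hshift] at hideal
  refine ⟨fun a ha => ⟨?_, le_of_mem_FF hideal.1 (mem_union_right _ ha)⟩, hideal⟩
  obtain ⟨b, hb, rfl⟩ := mem_image.mp ha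
  have := (hH.1 b hb).1
  omega

lemma exists_mem_SJ_lep {k n j l : ℕ} {S : Set (Finset ℕ)} {H : Finset ℕ}
    (hH : H ∈ SJcand k n S j l) : ∃ H' ∈ SJ k n S j l, lep H H' := by
  set C : Set (Finset ℕ) := {H' | H' ∈ SJcand k n S j l ∧ lep H H'}
  have hCfin : C.Finite :=
    (range (n + 1)).powerset.finite_toSet.subset fun H' hH' =>
      mem_powerset.mpr fun a ha => mem_range.mpr (Nat.lt_succ_of_le (hH'.1.1 a ha).2)
  -- maximal for the pointwise order of sorted enumerations, which is `≤_p` on `C`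
  obtain ⟨H', ⟨hH'cand, hHH'⟩, hmax⟩ := hCfin.exists_maximalFor
    (fun G (ℓ : ℕ) => (G.sort (· ≤ ·)).getD ℓ 0) C ⟨H, hH, ⟨rfl, fun _ => le_rfl⟩⟩
  refine ⟨H', ⟨hH'cand, fun H'' hH'' hH'H'' => ?_⟩, hHH'⟩
  have hle := hmax ⟨hH'', lep_trans hHH' hH'H''⟩ hH'H''.2
  exact eq_of_card_eq_of_getD_sort_eq hH'H''.1 fun ℓ => le_antisymm (hH'H''.2 ℓ) (hle ℓ)

theorem SJ_prec_general (k n i l : ℕ) (hl : 1 ≤ l)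
    (S T : Set (Finset ℕ)) (hS : IsAC k n S)
    (hTS : ACprec T S) :
    ACprec (SJ k n T i l) (SJ k n S (i + 1) l) := by
  intro H hH
  obtain ⟨H', hH'S, hlep⟩ := exists_mem_SJ_lep (image_add_one_mem_SJcand hl hS.1 hTS hH.1)
  exact ⟨H', hH'S, prep_iff_lep_image_add_one.mpr hlep⟩

/-- If `T ≺_p S` then `T([i, i+2l-1]) ≺_p S([i+1, i+2l])`. -/
theorem SJ_prec (k n i l : ℕ) (hk : 1 ≤ k) (hi : 1 ≤ i) (hl : 1 ≤ l) (hlk : l ≤ k)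
    (S T : Set (Finset ℕ)) (hS : IsAC k n S) (hT : IsAC k n T)
    (hTS : ACprec T S) :
    ACprec (SJ k n T i l) (SJ k n S (i + 1) l) :=
  SJ_prec_general k n i l hl S T hS hTS
end

section
/- Let S be an antichain in F_{2k}^{[1,n]} and let i ≥ 1. Then the pure complex B(S, i) generated by {G ∈ F(S) : min(G) ≥ i} decomposes as the union over j ≥ i of the joins B(S([j,j+1]), j+2) * {j, j+1}-simplex, where the j-th component consists precisely of the facets of B(S,i) with minimum element j. -/
/-!
A set of `F_{2(k+1)}` with minimum `j` is exactly `{j, j+1} ∪ H` with `H ∈ F_{2k}` contained in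
`[j+2, n]`. If such a set lies in `F(S)`, then `H` is a candidate for `S([j, j+1])`; the candidates
are finitely many, so `H` lies below a maximal one, that is, below an element of `S([j, j+1])`.
Conversely `H ≤ M ∈ S([j, j+1])` gives `{j, j+1} ∪ H ≤ {j, j+1} ∪ M ∈ F(S)`. Every facet of
`B(S, i)` has a minimum `j ≥ i`, which yields the decomposition of the faces.
-/

open Finset

lemma List.sum_lt_sum_of_getD_le {l₁ l₂ : List ℕ} (hlen : l₁.length = l₂.length)
    (hle : ∀ ℓ, l₁.getD ℓ 0 ≤ l₂.getD ℓ 0) (hne : l₁ ≠ l₂) : l₁.sum < l₂.sum := by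
  induction l₁ generalizing l₂ with
  | nil => simp_all [List.length_eq_zero_iff.mp hlen.symm]
  | cons a t ih =>
    obtain _ | ⟨b, t₂⟩ := l₂
    · simp at hlen
    have hab : a ≤ b := hle 0
    have htail : ∀ ℓ, t.getD ℓ 0 ≤ t₂.getD ℓ 0 := fun ℓ => hle (ℓ + 1)
    simp only [List.sum_cons]
    by_cases ht : t = t₂
    · subst ht
      have : a ≠ b := fun h => hne (h ▸ rfl)
      omega
    · have := ih (by simpa using hlen) htail ht
      omega

lemma lep_refl (F : Finset ℕ) : lep F F := ⟨rfl, fun _ => le_rfl⟩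

lemma lep.trans {F G H : Finset ℕ} (h₁ : lep F G) (h₂ : lep G H) : lep F H :=
  ⟨h₁.1.trans h₂.1, fun ℓ => (h₁.2 ℓ).trans (h₂.2 ℓ)⟩

lemma lep.sum_sort_lt {F G : Finset ℕ} (h : lep F G) (hne : F ≠ G) :
    (F.sort (· ≤ ·)).sum < (G.sort (· ≤ ·)).sum := by
  refine List.sum_lt_sum_of_getD_le (by simp [h.1]) h.2 fun hsort => hne ?_
  simpa only [sort_toFinset] using congrArg List.toFinset hsort

lemma Set.Finite.exists_lep_maximal {T : Set (Finset ℕ)} (hT : T.Finite) {H : Finset ℕ}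
    (hH : H ∈ T) : ∃ M ∈ T, lep H M ∧ ∀ M' ∈ T, lep M M' → M = M' := by
  obtain ⟨M, ⟨hMT, hHM⟩, hmax⟩ :=
    (hT.inter_of_left {M | lep H M}).exists_maximalFor
      (fun F : Finset ℕ => (F.sort (· ≤ ·)).sum) _ ⟨H, hH, lep_refl H⟩
  refine ⟨M, hMT, hHM, fun M' hM'T hMM' => ?_⟩
  by_contra hne
  have hlt := hMM'.sum_sort_lt hne
  exact hlt.not_ge (hmax ⟨hM'T, hHM.trans hMM'⟩ hlt.le)

lemma lep_insert {a : ℕ} {H H' : Finset ℕ} (h : lep H H') (ha : ∀ b ∈ H, a < b)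
    (ha' : ∀ b ∈ H', a < b) : lep (insert a H) (insert a H') := by
  have hsort : ∀ {K : Finset ℕ}, (∀ b ∈ K, a < b) →
      (insert a K).sort (· ≤ ·) = a :: K.sort (· ≤ ·) := fun hK =>
    sort_insert _ (fun b hb => (hK b hb).le) fun haK => lt_irrefl a (hK a haK)
  refine ⟨?_, fun ℓ => ?_⟩
  · rw [← length_sort (· ≤ ·), ← length_sort (α := ℕ) (· ≤ ·) (s := insert a H'), hsort ha,
      hsort ha']
    simp [h.1]
  · rw [hsort ha, hsort ha']
    cases ℓ
    · simp
    · exact h.2 _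

lemma lep_pair_union {j : ℕ} {H H' : Finset ℕ} (h : lep H H') (hH : ∀ a ∈ H, j + 2 ≤ a)
    (hH' : ∀ a ∈ H', j + 2 ≤ a) : lep ({j, j + 1} ∪ H) ({j, j + 1} ∪ H') := by
  simp only [insert_union, singleton_union]
  refine lep_insert (lep_insert h ?_ ?_) ?_ ?_ <;> intro b hb <;> grind

lemma biUnion_Icc_one_add_one {β : Type*} [DecidableEq β] (k : ℕ) (f : ℕ → Finset β) :
    (Icc 1 (k + 1)).biUnion f = f 1 ∪ (Icc 1 k).biUnion (fun m => f (m + 1)) := by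
  rw [← insert_Icc_add_one_left_eq_Icc (by omega : 1 ≤ k + 1), biUnion_insert,
    ← map_add_right_Icc 1 k 1, map_eq_image, image_biUnion]
  rfl

lemma apply_one_le_of_gap {k : ℕ} {y : ℕ → ℕ}
    (hgap : ∀ j, 1 ≤ j → j < k → y j + 2 ≤ y (j + 1)) : ∀ m, 1 ≤ m → m ≤ k → y 1 ≤ y m := by
  intro m
  induction m with
  | zero => omega
  | succ m ih =>
    intro _ hm
    rcases Nat.eq_zero_or_pos m with rfl | hm0
    · rfl
    · have := hgap m hm0 (by omega)
      have := ih hm0 (by omega)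
      omega

lemma mem_FF_zero_iff {n : ℕ} {G : Finset ℕ} : G ∈ FF 0 n ↔ G = ∅ := by
  constructor
  · rintro ⟨y, -, -, -, rfl⟩
    simp
  · rintro rfl
    exact ⟨fun _ => 1, le_rfl, by omega, by omega, by simp⟩

lemma mem_FF_add_one_iff {k n : ℕ} {G : Finset ℕ} :
    G ∈ FF (k + 1) n ↔ ∃ j H, 1 ≤ j ∧ j + 1 ≤ n ∧ H ∈ FF k n ∧ (∀ a ∈ H, j + 2 ≤ a) ∧
      G = {j, j + 1} ∪ H := by
  constructor
  · rintro ⟨y, hy1, hyn, hgap, rfl⟩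
    refine ⟨y 1, (Icc 1 k).biUnion fun m => {y (m + 1), y (m + 1) + 1}, hy1,
      hyn 1 le_rfl (by omega), ?_, ?_, biUnion_Icc_one_add_one k _⟩
    · rcases k with _ | k
      · exact mem_FF_zero_iff.mpr (by simp)
      · exact ⟨fun m => y (m + 1),
          (hy1.trans (Nat.le_add_right _ 2)).trans (hgap 1 le_rfl (by omega)),
          fun m h₁ h₂ => hyn (m + 1) (by omega) (by omega),
          fun m h₁ h₂ => hgap (m + 1) (by omega) (by omega), rfl⟩
    · simp only [mem_biUnion, mem_Icc, mem_insert, mem_singleton]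
      rintro a ⟨m, ⟨hm1, hmk⟩, ha⟩
      have := hgap m hm1 (by omega)
      have := apply_one_le_of_gap hgap m hm1 (by omega)
      omega
  · rintro ⟨j, H, hj, hjn, ⟨y, hy1, hyn, hgap, rfl⟩, hH, rfl⟩
    have hy : 1 ≤ k → j + 2 ≤ y 1 := fun hk =>
      hH _ (mem_biUnion.mpr ⟨1, mem_Icc.mpr ⟨le_rfl, hk⟩, mem_insert_self _ _⟩)
    refine ⟨fun m => if m = 1 then j else y (m - 1), by simpa using hj, fun m h₁ h₂ => ?_,
      fun m h₁ h₂ => ?_, ?_⟩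
    · dsimp only
      split_ifs
      · exact hjn
      · exact hyn (m - 1) (by omega) (by omega)
    · rcases Nat.eq_or_lt_of_le h₁ with rfl | h₁
      · simpa using hy (by omega)
      · have := hgap (m - 1) (by omega) (by omega)
        simp only [if_neg h₁.ne', if_neg (show m + 1 ≠ 1 by omega), Nat.add_sub_cancel]
        rwa [Nat.sub_add_cancel h₁.le] at this
    · rw [biUnion_Icc_one_add_one]
      congr 1
      refine biUnion_congr rfl fun m hm => ?_
      simp [show m ≠ 0 by grind]

lemma one_le_and_le_of_mem_FF {k n : ℕ} {G : Finset ℕ} (hG : G ∈ FF k n) {a : ℕ}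
    (ha : a ∈ G) : 1 ≤ a ∧ a ≤ n := by
  induction k generalizing G with
  | zero => simp [mem_FF_zero_iff.mp hG] at ha
  | succ k ih =>
    obtain ⟨j, H, hj, hjn, hHFF, -, rfl⟩ := mem_FF_add_one_iff.mp hG
    simp only [mem_union, mem_insert, mem_singleton] at ha
    rcases ha with (rfl | rfl) | ha
    · omega
    · omega
    · exact ih hHFF ha

lemma le_of_mem_pair_union {j : ℕ} {H : Finset ℕ} (hH : ∀ a ∈ H, j + 2 ≤ a) {a : ℕ}
    (ha : a ∈ {j, j + 1} ∪ H) : j ≤ a := by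
  simp only [mem_union, mem_insert, mem_singleton] at ha
  rcases ha with (rfl | rfl) | ha
  · rfl
  · omega
  · have := hH a ha
    omega

lemma mem_SJcand_one_iff {k n j : ℕ} {S : Set (Finset ℕ)} {H : Finset ℕ} :
    H ∈ SJcand k n S j 1 ↔ (∀ a ∈ H, j + 2 ≤ a ∧ a ≤ n) ∧ {j, j + 1} ∪ H ∈ idealOf k n S := by
  have : Icc j (j + 2 * 1 - 1) = {j, j + 1} := by
    ext a
    simp only [mem_Icc, mem_insert, mem_singleton]
    omega
  rw [SJcand, Set.mem_ofPred_eq, this]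

lemma SJcand_finite (k n j : ℕ) (S : Set (Finset ℕ)) : (SJcand k n S j 1).Finite := by
  refine (range (n + 1)).powerset.finite_toSet.subset fun H hH => ?_
  simp only [coe_powerset, Set.mem_preimage, Set.mem_powerset_iff, coe_subset]
  intro a ha
  have := (mem_SJcand_one_iff.mp hH).1 a ha
  simp only [mem_range]
  omega

lemma exists_mem_Bfacets_SJ_of_min {k n i j : ℕ} {S : Set (Finset ℕ)} {G : Finset ℕ}
    (hG : G ∈ Bfacets (k + 1) n S i) (hjG : j ∈ G) (hj : ∀ a ∈ G, j ≤ a) :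
    ∃ H ∈ Bfacets k n (SJ (k + 1) n S j 1) (j + 2), G = {j, j + 1} ∪ H := by
  obtain ⟨⟨hGFF, hGS⟩, -⟩ := hG
  obtain ⟨j', H, -, -, hHFF, hH, rfl⟩ := mem_FF_add_one_iff.mp hGFF
  obtain rfl : j' = j := le_antisymm (le_of_mem_pair_union hH hjG) (hj j' (by simp))
  have hHcand : H ∈ SJcand (k + 1) n S j' 1 := mem_SJcand_one_iff.mpr
    ⟨fun a ha => ⟨hH a ha, (one_le_and_le_of_mem_FF hHFF ha).2⟩, hGFF, hGS⟩
  obtain ⟨M, hMcand, hHM, hMmax⟩ := (SJcand_finite _ _ _ S).exists_lep_maximal hHcand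
  exact ⟨H, ⟨⟨hHFF, M, ⟨hMcand, hMmax⟩, hHM⟩, hH⟩, rfl⟩

lemma pair_union_mem_Bfacets {k n i j : ℕ} {S : Set (Finset ℕ)} (hij : i ≤ j) {H : Finset ℕ}
    (hH : H ∈ Bfacets k n (SJ (k + 1) n S j 1) (j + 2)) :
    {j, j + 1} ∪ H ∈ Bfacets (k + 1) n S i := by
  obtain ⟨⟨hHFF, M, ⟨hMcand, -⟩, hHM⟩, hHj⟩ := hH
  obtain ⟨hMj, hMFF, F, hFS, hMF⟩ := mem_SJcand_one_iff.mp hMcand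
  have hjM : j ∈ {j, j + 1} ∪ M := by simp
  have hj1M : j + 1 ∈ {j, j + 1} ∪ M := by simp
  refine ⟨⟨mem_FF_add_one_iff.mpr ⟨j, H, (one_le_and_le_of_mem_FF hMFF hjM).1,
    (one_le_and_le_of_mem_FF hMFF hj1M).2, hHFF, hHj, rfl⟩, F, hFS, ?_⟩,
    fun a ha => hij.trans (le_of_mem_pair_union hHj ha)⟩
  exact (lep_pair_union hHM hHj fun a ha => (hMj a ha).1).trans hMF

lemma mem_Bfacets_min_iff {k n i j : ℕ} {S : Set (Finset ℕ)} (hij : i ≤ j) {G : Finset ℕ} :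
    (G ∈ Bfacets (k + 1) n S i ∧ j ∈ G ∧ ∀ a ∈ G, j ≤ a) ↔
      ∃ H ∈ Bfacets k n (SJ (k + 1) n S j 1) (j + 2), G = {j, j + 1} ∪ H := by
  refine ⟨fun ⟨hG, hjG, hj⟩ => exists_mem_Bfacets_SJ_of_min hG hjG hj, ?_⟩
  rintro ⟨H, hH, rfl⟩
  exact ⟨pair_union_mem_Bfacets hij hH, by simp, fun a => le_of_mem_pair_union hH.2⟩

theorem B_decomposition_general (k n i : ℕ) (hk : 1 ≤ k) (S : Set (Finset ℕ)) :
    (∀ τ : Finset ℕ,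
      (∃ G ∈ Bfacets k n S i, τ ⊆ G) ↔
        ∃ j, i ≤ j ∧ ∃ H ∈ Bfacets (k - 1) n (SJ k n S j 1) (j + 2),
          τ ⊆ {j, j + 1} ∪ H)
    ∧ ∀ j, i ≤ j → ∀ G : Finset ℕ,
        (G ∈ Bfacets k n S i ∧ j ∈ G ∧ ∀ a ∈ G, j ≤ a) ↔
          ∃ H ∈ Bfacets (k - 1) n (SJ k n S j 1) (j + 2), G = {j, j + 1} ∪ H := by
  obtain ⟨k, rfl⟩ := Nat.exists_eq_add_of_le' hk
  rw [Nat.add_sub_cancel]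
  refine ⟨fun τ => ⟨?_, ?_⟩, fun j hij G => mem_Bfacets_min_iff hij⟩
  · rintro ⟨G, hG, hτG⟩
    obtain ⟨j, H, -, -, -, hH, rfl⟩ := mem_FF_add_one_iff.mp hG.1.1
    have hjG : j ∈ {j, j + 1} ∪ H := by simp
    obtain ⟨H', hH', hGH'⟩ :=
      exists_mem_Bfacets_SJ_of_min hG hjG fun a => le_of_mem_pair_union hH
    exact ⟨j, hG.2 j hjG, H', hH', hGH' ▸ hτG⟩
  · rintro ⟨j, hij, H, hH, hτ⟩
    exact ⟨_, pair_union_mem_Bfacets hij hH, hτ⟩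

/-- The decomposition `B(S, i) = ⋃_{j ≥ i} B(S([j,j+1]), j+2) * [j, j+1]`:
the faces of `B(S,i)` are exactly the subsets of sets `{j, j+1} ∪ H` with
`H` a facet of `B(S([j,j+1]), j+2)` and `j ≥ i`; moreover the facets of `B(S,i)`
with minimum element `j` are exactly the sets `{j, j+1} ∪ H` with `H` a facet of
`B(S([j,j+1]), j+2)`. -/
theorem B_decomposition (k n i : ℕ) (hk : 1 ≤ k) (hi : 1 ≤ i)
    (S : Set (Finset ℕ)) (hS : IsAC k n S) :
    (∀ τ : Finset ℕ,
      (∃ G ∈ Bfacets k n S i, τ ⊆ G) ↔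
        ∃ j, i ≤ j ∧ ∃ H ∈ Bfacets (k - 1) n (SJ k n S j 1) (j + 2),
          τ ⊆ {j, j + 1} ∪ H)
    ∧ ∀ j, i ≤ j → ∀ G : Finset ℕ,
        (G ∈ Bfacets k n S i ∧ j ∈ G ∧ ∀ a ∈ G, j ≤ a) ↔
          ∃ H ∈ Bfacets (k - 1) n (SJ k n S j 1) (j + 2), G = {j, j + 1} ∪ H :=
  B_decomposition_general k n i hk S
end

section
/- Let A be an antichain in P_k^n containing G = (1, n-2k+2, ..., n-k). Define A − 1 = {x − (1,...,1) : x ∈ A, x_1 > 1}, and P_A = P(A) \ P(A − 1), the difference of the order ideals generated by A and by A − 1. Then the map L(x) = x − (x_1 − 1)·(1,...,1) is a bijection from P_A onto P({G}), and consequently |P_A| = binom(n-k-1, k-1). -/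
/-- The poset `P_k^n` of strictly increasing `k`-tuples with entries in
`[1, n-k]`, with the componentwise partial order. -/
def Pset (k n : ℕ) : Set (Fin k → ℕ) :=
  {x | (∀ i j : Fin k, i < j → x i < x j) ∧ ∀ i, 1 ≤ x i ∧ x i ≤ n - k}

/-- The special element `G = (1, n-2k+2, n-2k+3, …, n-k)` of `P_k^n`. -/
def Gelt (k n : ℕ) : Fin k → ℕ :=
  fun i => if (i : ℕ) = 0 then 1 else n - 2 * k + 1 + (i : ℕ)

/-- The order ideal of `P_k^n` generated by an antichain `A`. -/
def idealP (k n : ℕ) (A : Set (Fin k → ℕ)) : Set (Fin k → ℕ) :=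
  {x | x ∈ Pset k n ∧ ∃ a ∈ A, x ≤ a}

/-- `A − 1`: subtract the all-ones vector from each element of `A` whose first
coordinate exceeds `1` (for increasing tuples, equivalently all coordinates
exceed `1`). -/
def Asub1 (k : ℕ) (A : Set (Fin k → ℕ)) : Set (Fin k → ℕ) :=
  {y | ∃ a ∈ A, (∀ i, 1 < a i) ∧ y = fun i => a i - 1}

/-- Step lemma: a strictly increasing tuple grows at least by `d` over `d` steps. -/
lemma steps_aux {k : ℕ} {z : Fin k → ℕ}
    (hz : ∀ i j : Fin k, i < j → z i < z j) :
    ∀ (d i : ℕ) (hi : i < k) (h : i + d < k), z ⟨i, hi⟩ + d ≤ z ⟨i + d, h⟩ := by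
  intro d
  induction d with
  | zero => intro i hi h; simp
  | succ d ih =>
    intro i hi h
    have h1 : i + d < k := by omega
    have h2 := ih i hi h1
    have h3 : (⟨i + d, h1⟩ : Fin k) < ⟨i + (d + 1), h⟩ := by
      simp [Fin.lt_def]
    have := hz ⟨i + d, h1⟩ ⟨i + (d + 1), h⟩ h3
    omega

/-- Membership in the ideal generated by `G` is equivalent to membership in
`P_k^n` with first coordinate `1`. -/
lemma mem_idealG {k n : ℕ} (hk : 0 < k) (hn : 2 * k ≤ n) (z : Fin k → ℕ) :
    z ∈ idealP k n {Gelt k n} ↔ z ∈ Pset k n ∧ z ⟨0, hk⟩ = 1 := by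
  constructor
  · rintro ⟨hzP, a, ha, hle⟩
    rcases ha with rfl
    refine ⟨hzP, ?_⟩
    have h1 := (hzP.2 ⟨0, hk⟩).1
    have h2 := hle ⟨0, hk⟩
    simp [Gelt] at h2
    omega
  · rintro ⟨hzP, hz0⟩
    refine ⟨hzP, Gelt k n, rfl, ?_⟩
    intro i
    by_cases hi : (i : ℕ) = 0
    · have : i = ⟨0, hk⟩ := Fin.ext hi
      subst this
      simp [Gelt, hz0]
    · have hik : (i : ℕ) < k := i.2
      have hlast : (i : ℕ) + (k - 1 - (i : ℕ)) < k := by omega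
      have h2 := steps_aux hzP.1 (k - 1 - (i : ℕ)) (i : ℕ) hik hlast
      have hieq : (⟨(i : ℕ), hik⟩ : Fin k) = i := Fin.ext rfl
      rw [hieq] at h2
      have h3 := (hzP.2 ⟨(i : ℕ) + (k - 1 - (i : ℕ)), hlast⟩).2
      simp only [Gelt, hi, if_false]
      omega

/-- The number of strictly increasing `m`-tuples with values in `[1, N]` is
`N.choose m`. -/
lemma card_incr_tuples (m N : ℕ) :
    Nat.card {f : Fin m → ℕ //
        (∀ i j : Fin m, i < j → f i < f j) ∧ ∀ i, 1 ≤ f i ∧ f i ≤ N} =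
      N.choose m := by
  classical
  set S := {f : Fin m → ℕ //
      (∀ i j : Fin m, i < j → f i < f j) ∧ ∀ i, 1 ≤ f i ∧ f i ≤ N} with hS
  have hval : ∀ (f : S) (i : Fin m), (f : Fin m → ℕ) i - 1 < N := by
    intro f i
    have := f.2.2 i
    omega
  let g : S → Fin m → Fin N := fun f i => ⟨(f : Fin m → ℕ) i - 1, hval f i⟩
  have hgmono : ∀ f : S, StrictMono (g f) := by
    intro f i j hij
    have h1 := f.2.1 i j hij
    have h2 := (f.2.2 i).1
    simp only [g, Fin.lt_def]
    omega
  have hgcard : ∀ f : S, (Finset.image (g f) Finset.univ).card = m := by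
    intro f
    rw [Finset.card_image_of_injective _ (hgmono f).injective, Finset.card_univ,
      Fintype.card_fin]
  let F : S → {s : Finset (Fin N) // s.card = m} :=
    fun f => ⟨Finset.image (g f) Finset.univ, hgcard f⟩
  have hFbij : Function.Bijective F := by
    constructor
    · intro f f' h
      have hset : Finset.image (g f) Finset.univ = Finset.image (g f') Finset.univ :=
        congrArg Subtype.val h
      have h1 : g f = (Finset.image (g f) Finset.univ).orderEmbOfFin (hgcard f) :=
        Finset.orderEmbOfFin_unique _ (fun i => Finset.mem_image_of_mem _ (Finset.mem_univ i))
          (hgmono f)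
      have h2 : g f' = (Finset.image (g f) Finset.univ).orderEmbOfFin (hgcard f) := by
        apply Finset.orderEmbOfFin_unique _ _ (hgmono f')
        intro i
        rw [hset]
        exact Finset.mem_image_of_mem _ (Finset.mem_univ i)
      have hgg : g f = g f' := h1.trans h2.symm
      apply Subtype.ext
      funext i
      have h3 : g f i = g f' i := congrFun hgg i
      have hv : (f : Fin m → ℕ) i - 1 = (f' : Fin m → ℕ) i - 1 :=
        congrArg Fin.val h3
      have := (f.2.2 i).1
      have := (f'.2.2 i).1
      omega
    · rintro ⟨s, hs⟩
      let e := s.orderEmbOfFin hs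
      have hp : (∀ i j : Fin m, i < j →
            (fun i => (e i : ℕ) + 1) i < (fun i => (e i : ℕ) + 1) j)
          ∧ ∀ i, 1 ≤ (fun i => (e i : ℕ) + 1) i ∧ (fun i => (e i : ℕ) + 1) i ≤ N := by
        constructor
        · intro i j hij
          show (e i : ℕ) + 1 < (e j : ℕ) + 1
          have := e.strictMono hij
          simp only [Fin.lt_def] at this
          omega
        · intro i
          show 1 ≤ (e i : ℕ) + 1 ∧ (e i : ℕ) + 1 ≤ N
          have := (e i).2
          omega
      refine ⟨⟨fun i => (e i : ℕ) + 1, hp⟩, ?_⟩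
      apply Subtype.ext
      simp only [F]
      apply Finset.coe_injective
      rw [Finset.coe_image, Finset.coe_univ, Set.image_univ]
      have hge : g ⟨fun i => (e i : ℕ) + 1, hp⟩ = fun i => e i := by
        funext i
        apply Fin.ext
        simp [g]
      rw [hge]
      exact Finset.range_orderEmbOfFin s hs
  rw [Nat.card_eq_of_bijective F hFbij, Nat.card_eq_fintype_card,
    Fintype.card_finset_len, Fintype.card_fin]

/-- The successor embedding `Fin (k-1) → Fin k`. -/
def fsucc {k : ℕ} (j : Fin (k - 1)) : Fin k :=
  ⟨(j : ℕ) + 1, by have := j.2; omega⟩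

/-- Prepend `1` to a `(k-1)`-tuple, shifting everything up by `1`. -/
def fdrop {k : ℕ} (f : Fin (k - 1) → ℕ) : Fin k → ℕ :=
  fun i => if h : (i : ℕ) = 0 then 1
    else f ⟨(i : ℕ) - 1, by have := i.2; omega⟩ + 1

lemma fdrop_succ {k : ℕ} (f : Fin (k - 1) → ℕ) (j : Fin (k - 1)) :
    fdrop f (fsucc j) = f j + 1 := by
  unfold fdrop fsucc
  rw [dif_neg (Nat.succ_ne_zero (j : ℕ))]
  congr 1

lemma fdrop_mem {k n : ℕ} (hk : 0 < k) (hn : 2 * k ≤ n) (f : Fin (k - 1) → ℕ)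
    (hf1 : ∀ i j : Fin (k - 1), i < j → f i < f j)
    (hf2 : ∀ i, 1 ≤ f i ∧ f i ≤ n - k - 1) :
    fdrop f ∈ idealP k n {Gelt k n} := by
  rw [mem_idealG hk hn]
  refine ⟨⟨?_, ?_⟩, ?_⟩
  · intro i j hij
    have hij' : (i : ℕ) < (j : ℕ) := Fin.lt_def.mp hij
    have hj0 : ¬((j : ℕ) = 0) := by omega
    unfold fdrop
    rw [dif_neg hj0]
    by_cases hi0 : (i : ℕ) = 0
    · rw [dif_pos hi0]
      have := (hf2 ⟨(j : ℕ) - 1, by have := j.2; omega⟩).1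
      omega
    · rw [dif_neg hi0]
      have := hf1 ⟨(i : ℕ) - 1, by have := i.2; omega⟩
        ⟨(j : ℕ) - 1, by have := j.2; omega⟩
        (Fin.mk_lt_mk.mpr (by omega))
      omega
  · intro i
    unfold fdrop
    by_cases hi0 : (i : ℕ) = 0
    · rw [dif_pos hi0]; omega
    · rw [dif_neg hi0]
      have h1 := (hf2 ⟨(i : ℕ) - 1, by have := i.2; omega⟩).2
      have h2 := (hf2 ⟨(i : ℕ) - 1, by have := i.2; omega⟩).1
      omega
  · exact dif_pos rfl

/-- The ideal generated by `G` has cardinality `C(n-k-1, k-1)`. -/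
lemma card_idealG (k n : ℕ) (hk : 0 < k) (hn : 2 * k ≤ n) :
    Nat.card (idealP k n {Gelt k n}) = Nat.choose (n - k - 1) (k - 1) := by
  classical
  rw [← card_incr_tuples (k - 1) (n - k - 1)]
  have hdown : ∀ z ∈ idealP k n {Gelt k n},
      (∀ i j : Fin (k - 1), i < j → z (fsucc i) - 1 < z (fsucc j) - 1) ∧
        ∀ j, 1 ≤ z (fsucc j) - 1 ∧ z (fsucc j) - 1 ≤ n - k - 1 := by
    intro z hz
    obtain ⟨hzP, hz0⟩ := (mem_idealG hk hn z).1 hz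
    constructor
    · intro i j hij
      have hij' : (i : ℕ) < (j : ℕ) := Fin.lt_def.mp hij
      have h1 : z (fsucc i) < z (fsucc j) :=
        hzP.1 (fsucc i) (fsucc j) (by simp only [fsucc, Fin.mk_lt_mk]; omega)
      have h2 := (hzP.2 (fsucc i)).1
      omega
    · intro j
      have h1 : z ⟨0, hk⟩ < z (fsucc j) :=
        hzP.1 ⟨0, hk⟩ (fsucc j) (by simp only [fsucc, Fin.mk_lt_mk]; omega)
      have h2 := (hzP.2 (fsucc j)).2
      omega
  apply Nat.card_eq_of_bijective
    (f := fun z : idealP k n {Gelt k n} =>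
      (⟨fun j : Fin (k - 1) => (z : Fin k → ℕ) (fsucc j) - 1,
        (hdown z z.2).1, (hdown z z.2).2⟩ :
        {f : Fin (k - 1) → ℕ //
          (∀ i j : Fin (k - 1), i < j → f i < f j) ∧
            ∀ i, 1 ≤ f i ∧ f i ≤ n - k - 1}))
  constructor
  · intro z z' h
    obtain ⟨hzP, hz0⟩ := (mem_idealG hk hn _).1 z.2
    obtain ⟨hzP', hz0'⟩ := (mem_idealG hk hn _).1 z'.2
    apply Subtype.ext
    funext i
    by_cases hi : (i : ℕ) = 0
    · have : i = ⟨0, hk⟩ := Fin.ext hi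
      subst this
      rw [hz0, hz0']
    · have hik : (i : ℕ) - 1 < k - 1 := by have := i.2; omega
      have hv : (z : Fin k → ℕ) (fsucc ⟨(i : ℕ) - 1, hik⟩) - 1 =
          (z' : Fin k → ℕ) (fsucc ⟨(i : ℕ) - 1, hik⟩) - 1 :=
        congrFun (congrArg Subtype.val h) ⟨(i : ℕ) - 1, hik⟩
      have hieq : fsucc (⟨(i : ℕ) - 1, hik⟩ : Fin (k - 1)) = i :=
        Fin.ext (by simp only [fsucc]; omega)
      rw [hieq] at hv
      have := (hzP.2 i).1
      have := (hzP'.2 i).1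
      omega
  · rintro ⟨f, hf1, hf2⟩
    refine ⟨⟨fdrop f, fdrop_mem hk hn f hf1 hf2⟩, ?_⟩
    apply Subtype.ext
    funext j
    show fdrop f (fsucc j) - 1 = f j
    rw [fdrop_succ]
    omega

/-- For an antichain `A` of `P_k^n` containing `G`, the map
`L(x) = x − (x_1 − 1)·1` is a bijection from `P_A = P(A) \\ P(A−1)` onto the
order ideal generated by `G`; consequently `|P_A| = C(n-k-1, k-1)`. -/
theorem L_bijection (k n : ℕ) (hk : 0 < k) (hn : 2 * k ≤ n)
    (A : Set (Fin k → ℕ)) (hA : A ⊆ Pset k n) (hAC : IsAntichain (· ≤ ·) A)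
    (hG : Gelt k n ∈ A) :
    Set.BijOn (fun x : Fin k → ℕ => fun i => x i - (x ⟨0, hk⟩ - 1))
      (idealP k n A \ idealP k n (Asub1 k A)) (idealP k n {Gelt k n})
    ∧ Nat.card {x : Fin k → ℕ //
        x ∈ idealP k n A \ idealP k n (Asub1 k A)} =
      Nat.choose (n - k - 1) (k - 1) := by
  classical
  have hfirst : ∀ x ∈ Pset k n, ∀ i : Fin k, x ⟨0, hk⟩ ≤ x i := by
    intro x hx i
    by_cases hi : (i : ℕ) = 0
    · have : i = ⟨0, hk⟩ := Fin.ext hi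
      rw [this]
    · exact le_of_lt (hx.1 ⟨0, hk⟩ i (Fin.lt_def.mpr (by show 0 < (i : ℕ); omega)))
  have hbij : Set.BijOn (fun x : Fin k → ℕ => fun i => x i - (x ⟨0, hk⟩ - 1))
      (idealP k n A \ idealP k n (Asub1 k A)) (idealP k n {Gelt k n}) := by
    refine ⟨?_, ?_, ?_⟩
    · -- MapsTo
      rintro x ⟨⟨hxP, a, haA, hxa⟩, -⟩
      rw [mem_idealG hk hn]
      have h0 := (hxP.2 ⟨0, hk⟩).1
      refine ⟨⟨?_, ?_⟩, by show x ⟨0, hk⟩ - (x ⟨0, hk⟩ - 1) = 1; omega⟩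
      · intro i j hij
        show x i - (x ⟨0, hk⟩ - 1) < x j - (x ⟨0, hk⟩ - 1)
        have h1 := hxP.1 i j hij
        have h2 := hfirst x hxP i
        omega
      · intro i
        show 1 ≤ x i - (x ⟨0, hk⟩ - 1) ∧ x i - (x ⟨0, hk⟩ - 1) ≤ n - k
        have h2 := hfirst x hxP i
        have h3 := (hxP.2 i).2
        omega
    · -- InjOn
      have key : ∀ x ∈ idealP k n A \ idealP k n (Asub1 k A),
          ∀ y ∈ idealP k n A \ idealP k n (Asub1 k A),
          (fun i => x i - (x ⟨0, hk⟩ - 1)) = (fun i => y i - (y ⟨0, hk⟩ - 1)) →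
          x ⟨0, hk⟩ ≤ y ⟨0, hk⟩ → x = y := by
        rintro x ⟨⟨hxP, a, haA, hxa⟩, hxn⟩ y ⟨⟨hyP, b, hbB, hyb⟩, -⟩ heq hle
        have h0x := (hxP.2 ⟨0, hk⟩).1
        have h0y := (hyP.2 ⟨0, hk⟩).1
        rcases eq_or_lt_of_le hle with heq0 | hlt0
        · funext i
          have hv : x i - (x ⟨0, hk⟩ - 1) = y i - (y ⟨0, hk⟩ - 1) := congrFun heq i
          have := hfirst x hxP i
          have := hfirst y hyP i
          omega
        · exfalso
          apply hxn
          refine ⟨hxP, fun i => b i - 1, ⟨b, hbB, ?_, rfl⟩, ?_⟩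
          · intro i
            have hv : x i - (x ⟨0, hk⟩ - 1) = y i - (y ⟨0, hk⟩ - 1) := congrFun heq i
            have h1 := hfirst x hxP i
            have h2 := hfirst y hyP i
            have h3 : y i ≤ b i := hyb i
            have h4 := (hxP.2 i).1
            omega
          · intro i
            show x i ≤ b i - 1
            have hv : x i - (x ⟨0, hk⟩ - 1) = y i - (y ⟨0, hk⟩ - 1) := congrFun heq i
            have h1 := hfirst x hxP i
            have h2 := hfirst y hyP i
            have h3 : y i ≤ b i := hyb i
            omega
      intro x hx y hy heq
      rcases le_total (x ⟨0, hk⟩) (y ⟨0, hk⟩) with h | h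
      · exact key x hx y hy heq h
      · exact (key y hy x hx heq.symm h).symm
    · -- SurjOn
      intro z hz
      obtain ⟨hzP, hz0⟩ := (mem_idealG hk hn z).1 hz
      obtain ⟨-, g, hgmem, hzle⟩ := hz
      rcases hgmem with rfl
      set P : ℕ → Prop := fun t => ∃ a ∈ A, ∀ i, z i + t ≤ a i with hPdef
      have hP0 : P 0 := ⟨Gelt k n, hG, fun i => by simpa using hzle i⟩
      set T := Nat.findGreatest P (n - k) with hT
      have hPT : P T := Nat.findGreatest_spec (Nat.zero_le _) hP0
      have hnot : ¬ P (T + 1) := by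
        by_cases hb : T + 1 ≤ n - k
        · exact Nat.findGreatest_is_greatest (Nat.lt_succ_self T) hb
        · rintro ⟨a, haA, hle⟩
          have h1 := hle ⟨0, hk⟩
          have h2 := ((hA haA).2 ⟨0, hk⟩).2
          omega
      obtain ⟨a, haA, hle⟩ := hPT
      have haP := hA haA
      have hxP : (fun i => z i + T) ∈ Pset k n := by
        refine ⟨fun i j hij => ?_, fun i => ?_⟩
        · show z i + T < z j + T
          have := hzP.1 i j hij
          omega
        show 1 ≤ z i + T ∧ z i + T ≤ n - k
        have h1 := (hzP.2 i).1
        have h2 := hle i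
        have h3 := ((haP).2 i).2
        omega
      refine ⟨fun i => z i + T, ⟨⟨hxP, a, haA, fun i => hle i⟩, ?_⟩, ?_⟩
      · rintro ⟨-, b, ⟨a', ha'A, ha'gt, rfl⟩, hxb⟩
        apply hnot
        refine ⟨a', ha'A, fun i => ?_⟩
        have h1 : z i + T ≤ a' i - 1 := hxb i
        have h2 := ha'gt i
        omega
      · funext i
        show z i + T - (z ⟨0, hk⟩ + T - 1) = z i
        omega
  refine ⟨hbij, ?_⟩
  have h1 : Nat.card {x : Fin k → ℕ //
      x ∈ idealP k n A \ idealP k n (Asub1 k A)} =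
      Nat.card (idealP k n {Gelt k n}) :=
    Nat.card_congr (Set.BijOn.equiv _ hbij)
  rw [h1, card_idealG k n hk hn]
end
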